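/- Let Ψ be a nonempty family of affine maps ℝ² → ℝ² and Y ⊆ ℝ². Suppose that for every x ∈ Y the set Ψx = {ψ(x) : ψ ∈ Ψ} is contained in some affine line. Then there is an affine map ψ₀ : ℝ² → ℝ² with ψ₀ ≠ 0 such that for every x ∈ Y with ψ₀(x) ≠ 0, the set Ψx is contained in an affine line whose direction is the line spanned by ψ₀(x). -/

import Mathlib

open MeasureTheory Filter Metric Set
open scoped ENNReal NNReal Topology RealInnerProductSpace Classical

noncomputable section

abbrev E2 := EuclideanSpace ℝ (Fin 2)
abbrev Mat2 := Matrix (Fin 2) (Fin 2) ℝ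
abbrev Aff2 := Mat2 × E2

instance : MeasurableSpace Mat2 := inferInstanceAs (MeasurableSpace (Fin 2 → Fin 2 → ℝ))

/-- A matrix viewed as a continuous linear map on euclidean `ℝ²`. -/
def matCLM (A : Mat2) : E2 →L[ℝ] E2 := Matrix.toEuclideanCLM (𝕜 := ℝ) A

/-- An affine map of `ℝ²`, represented as a pair (linear part, translation part). -/
def affApply (f : Aff2) (x : E2) : E2 := matCLM f.1 x + f.2

/-- Composition of affine maps. -/
def affComp (f g : Aff2) : Aff2 := (f.1 * g.1, affApply f g.2)

/-- The identity affine map. -/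
def affId : Aff2 := (1, 0)

/-- The inverse of an (invertible) affine map. -/
def affInv (g : Aff2) : Aff2 := (g.1⁻¹, -(matCLM (g.1⁻¹) g.2))

/-- The euclidean norm on affine maps of `ℝ²`, identified with `ℝ⁶`. -/
def affNorm (f : Aff2) : ℝ := Real.sqrt ((∑ i, ∑ j, (f.1 i j) ^ 2) + ∑ i, (f.2 i) ^ 2)

/-- A contracting map. -/
def IsContractingAff (f : Aff2) : Prop := ∃ r : ℝ≥0, r < 1 ∧ LipschitzWith r (affApply f)

/-- Composition `φ_{i₁} ∘ ⋯ ∘ φ_{iₙ}` along a word. -/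
def wordAff {Λ : Type*} (φ : Λ → Aff2) {n : ℕ} (w : Fin n → Λ) : Aff2 :=
  (List.ofFn fun k => φ (w k)).foldr affComp affId

/-- Product `A_{i₁} ⋯ A_{iₙ}` along a word. -/
def wordMat {Λ : Type*} (A : Λ → Mat2) {n : ℕ} (w : Fin n → Λ) : Mat2 :=
  (List.ofFn fun k => A (w k)).prod

/-- Composition along a word given as a list. -/
def listAff {Λ : Type*} (φ : Λ → Aff2) (l : List Λ) : Aff2 := (l.map φ).foldr affComp affId

/-- Matrix product along a word given as a list. -/
def listMat {Λ : Type*} (A : Λ → Mat2) (l : List Λ) : Mat2 := (l.map A).prod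

/-- Exponential separation of the system `φ`. -/
def ExpSeparated {Λ : Type*} (φ : Λ → Aff2) : Prop :=
  ∃ c : ℝ, 0 < c ∧ ∀ (n : ℕ) (w₁ w₂ : Fin n → Λ), w₁ ≠ w₂ →
    affNorm (wordAff φ w₁ - wordAff φ w₂) > c ^ n

/-- Total irreducibility: no finite nonempty set of lines is invariant under all the `A i`. -/
def TotallyIrreducible {Λ : Type*} (A : Λ → Mat2) : Prop :=
  ¬ ∃ S : Finset (Submodule ℝ E2), S.Nonempty ∧ (∀ W ∈ S, Module.finrank ℝ W = 1) ∧
      ∀ i, ∀ W ∈ S, Submodule.map (Matrix.toEuclideanLin (A i)) W ∈ S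

/-- Non-conformality: in no coordinate system are all the `A i` scalar multiples of
orthogonal matrices. -/
def NonConformal {Λ : Type*} (A : Λ → Mat2) : Prop :=
  ¬ ∃ B : Mat2, IsUnit B ∧ ∀ i, ∃ (c : ℝ) (O : Mat2), Matrix.transpose O * O = 1 ∧ B * A i * B⁻¹ = c • O

/-- The maps `φ i` have no common fixed point. -/
def NoCommonFixedPoint {Λ : Type*} (φ : Λ → Aff2) : Prop :=
  ¬ ∃ x : E2, ∀ i, affApply (φ i) x = x

/-- `μ` is the self-affine measure of the system `(φ, p)`: it is compactly supported and
satisfies `μ = ∑ pᵢ (φᵢ)μ`. -/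
def IsSelfAffine {Λ : Type*} [Fintype Λ] (φ : Λ → Aff2) (p : Λ → ℝ) (μ : Measure E2) : Prop :=
  (∃ K : Set E2, IsCompact K ∧ μ K = 1) ∧
    μ = ∑ i, ENNReal.ofReal (p i) • Measure.map (affApply (φ i)) μ

/-- Exact dimensionality of a measure. -/
def IsExactDim {X : Type*} [MeasurableSpace X] [PseudoMetricSpace X] (ν : Measure X) (s : ℝ) :
    Prop :=
  ∀ᵐ x ∂ν, Tendsto (fun r : ℝ => Real.log (ν (closedBall x r)).toReal / Real.log r)
    (nhdsWithin 0 (Set.Ioi 0)) (nhds s)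

/-- Largest singular value `α₁(A) = ‖A‖`. -/
def alpha1 (A : Mat2) : ℝ := ‖matCLM A‖

/-- Smallest singular value `α₂(A) = ‖A⁻¹‖⁻¹` (for invertible `A`). -/
def alpha2 (A : Mat2) : ℝ := ‖matCLM (A⁻¹)‖⁻¹

/-- `A` has distinct singular values. -/
def HasDistinctSV (A : Mat2) : Prop := alpha2 A < alpha1 A

/-- Orthogonal projection onto a subspace `W ≤ ℝ²`, as a map `ℝ² → ℝ²`. -/
def projMap (W : Submodule ℝ E2) : E2 →L[ℝ] E2 := W.subtypeL.comp (W.orthogonalProjection)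

/-- The metric on `ℝP¹` (lines through the origin): `d(V,W) = ‖π_V − π_W‖`. -/
def dRP1 (V W : Submodule ℝ E2) : ℝ := ‖projMap V - projMap W‖

/-- `W` is the direction of the major axis of the ellipse `A(unit ball)`. -/
def IsMajorDir (A : Mat2) (W : Submodule ℝ E2) : Prop :=
  ∃ v : E2, ‖v‖ = 1 ∧ ‖matCLM A v‖ = alpha1 A ∧ W = Submodule.span ℝ {matCLM A v}

/-- The major axis direction `L(A)` (an arbitrary choice among the major directions;
it is unique when the singular values of `A` are distinct). -/
def majorDir (A : Mat2) : Submodule ℝ E2 :=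
  if h : ∃ W, IsMajorDir A W then h.choose else ⊥

/-- `-t·log₂ t`. -/
def h2 (t : ℝ) : ℝ := -(t * Real.logb 2 t)

/-- Level-`n` dyadic interval. -/
def dyI (n : ℕ) (k : ℤ) : Set ℝ := Set.Ico ((k : ℝ) / 2 ^ n) (((k : ℝ) + 1) / 2 ^ n)

/-- Shannon entropy (base 2) of a measure on `ℝ` w.r.t. the level-`n` dyadic partition. -/
def Hdy1 (ν : Measure ℝ) (n : ℕ) : ℝ := ∑' k : ℤ, h2 (ν (dyI n k)).toReal

/-- Level-`n` dyadic square in `ℝ²`. -/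
def dyC (n : ℕ) (k : ℤ × ℤ) : Set E2 := {x : E2 | x 0 ∈ dyI n k.1 ∧ x 1 ∈ dyI n k.2}

/-- Shannon entropy (base 2) of a measure on `ℝ²` w.r.t. the level-`n` dyadic partition. -/
def Hdy2 (ν : Measure E2) (n : ℕ) : ℝ := ∑' k : ℤ × ℤ, h2 (ν (dyC n k)).toReal

/-- Level-`n` dyadic cell in the space of affine maps (identified with `ℝ⁶`). -/
def dyA (n : ℕ) (k : (Fin 2 → Fin 2 → ℤ) × (Fin 2 → ℤ)) : Set Aff2 :=
  {f : Aff2 | (∀ i j, f.1 i j ∈ dyI n (k.1 i j)) ∧ ∀ i, f.2 i ∈ dyI n (k.2 i)}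

/-- Shannon entropy (base 2) of a measure on affine maps w.r.t. the level-`n` dyadic
partition of `ℝ⁶`. -/
def HdyA (θ : Measure Aff2) (n : ℕ) : ℝ :=
  ∑' k : (Fin 2 → Fin 2 → ℤ) × (Fin 2 → ℤ), h2 (θ (dyA n k)).toReal

/-- The convolution `θ.ν`: push-forward of `θ × ν` under the action `(φ,x) ↦ φ(x)`. -/
def actConv (θ : Measure Aff2) (ν : Measure E2) : Measure E2 :=
  Measure.map (fun q : Aff2 × E2 => affApply q.1 q.2) (θ.prod ν)

/-- The measure `θ.x`: push-forward of `θ` under `φ ↦ φ(x)`. -/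
def affPush (θ : Measure Aff2) (x : E2) : Measure E2 :=
  Measure.map (fun f : Aff2 => affApply f x) θ

/-- `ν` is `(W,δ)`-concentrated: `1−δ` of its mass lies within distance `δ` of a
translate of `W`. -/
def Concentrated (ν : Measure E2) (W : Submodule ℝ E2) (δ : ℝ) : Prop :=
  ∃ b : E2, 1 - δ ≤ (ν (Metric.cthickening δ ((fun w => b + w) '' (W : Set E2)))).toReal

/-- Shannon entropy `H(p)` of a probability vector. -/
def entropyVec {Λ : Type*} [Fintype Λ] (p : Λ → ℝ) : ℝ := -∑ i, p i * Real.logb 2 (p i)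

/-- The Lyapunov dimension determined by the entropy `Hp` and Lyapunov exponents `χ₁ ≥ χ₂`. -/
def lyapDim (Hp χ₁ χ₂ : ℝ) : ℝ :=
  if Hp ≤ |χ₁| then Hp / |χ₁|
  else if Hp ≤ |χ₁| + |χ₂| then 1 + (Hp - |χ₁|) / |χ₂|
  else 2 * Hp / (|χ₁| + |χ₂|)

/-- The point of `ℝ²` with coordinates `(a, b)`. -/
def mkE2 (a b : ℝ) : E2 := (EuclideanSpace.equiv (Fin 2) ℝ).symm ![a, b]


/-- The scalar projection `x ↦ ⟪v, x⟫` of `ℝ²` onto the direction of `v`. -/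
def sproj (v x : E2) : ℝ := inner ℝ v x

lemma affApply_sub (f g : Aff2) (x : E2) :
    affApply (f - g) x = affApply f x - affApply g x := by
  simp only [affApply, Prod.fst_sub, Prod.snd_sub, map_sub]
  simp [matCLM]
  abel

lemma span_eq_of_mem {v w : E2} (hv : v ≠ 0) (hw : w ≠ 0)
    (hmem : w ∈ Submodule.span ℝ {v}) :
    Submodule.span ℝ ({w} : Set E2) = Submodule.span ℝ {v} := by
  obtain ⟨c, rfl⟩ := Submodule.mem_span_singleton.mp hmem
  have hc : c ≠ 0 := by rintro rfl; simp at hw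
  apply le_antisymm
  · rw [Submodule.span_singleton_le_iff_mem]
    exact Submodule.smul_mem _ c (Submodule.mem_span_singleton_self v)
  · rw [Submodule.span_singleton_le_iff_mem, Submodule.mem_span_singleton]
    exact ⟨c⁻¹, by rw [smul_smul, inv_mul_cancel₀ hc, one_smul]⟩

/-- **Lemma 5.1: families of affine maps which evaluate to lines.** If `Ψ` is a nonempty
family of affine maps of `ℝ²` and `Ψx` lies on an affine line for every `x ∈ Y`, then
there is a nonzero affine map `ψ₀` such that, for every `x ∈ Y` with `ψ₀(x) ≠ 0`, the set
`Ψx` lies on an affine line in direction `span(ψ₀(x))`. -/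
theorem stmt14 (Ψ : Set Aff2) (hΨ : Ψ.Nonempty) (Y : Set E2)
    (h : ∀ x ∈ Y, ∃ v b : E2, v ≠ 0 ∧ ∀ f ∈ Ψ, affApply f x - b ∈ Submodule.span ℝ {v}) :
    ∃ ψ₀ : Aff2, ψ₀ ≠ 0 ∧ ∀ x ∈ Y, affApply ψ₀ x ≠ 0 →
      ∃ b : E2, ∀ f ∈ Ψ, affApply f x - b ∈ Submodule.span ℝ {affApply ψ₀ x} := by
  obtain ⟨f₀, hf₀⟩ := hΨ
  by_cases hsing : ∀ f ∈ Ψ, f = f₀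
  · refine ⟨(1, 0), ?_, ?_⟩
    · intro hcon
      have : (1 : Mat2) = 0 := congrArg Prod.fst hcon
      exact one_ne_zero this
    · intro x _ _
      refine ⟨affApply f₀ x, fun f hf => ?_⟩
      rw [hsing f hf]
      simp
  · push_neg at hsing
    obtain ⟨f₁, hf₁, hne⟩ := hsing
    refine ⟨f₁ - f₀, sub_ne_zero.mpr hne, ?_⟩
    intro x hx hψx
    obtain ⟨v, b, hv, hb⟩ := h x hx
    have hmem : affApply (f₁ - f₀) x ∈ Submodule.span ℝ {v} := by
      rw [affApply_sub]
      have := Submodule.sub_mem _ (hb f₁ hf₁) (hb f₀ hf₀)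
      simpa using this
    refine ⟨b, fun f hf => ?_⟩
    rw [span_eq_of_mem hv hψx hmem]
    exact hb f hf

end
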